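/- For every integer d ≥ 3, the integral R^hydro_d satisfies R^hydro_d ≤ 8/(d+1). -/

import Mathlib

/-!
Write `2d - 2 ∑ cos (2π xᵢ) = ∑ 4 sin² (π xᵢ) =: Q x` and `Q⁻¹ = ∫₀^∞ e^{-tQ} dt`. By Tonelli
the integral becomes `∫₀^∞ p(t)^d dt`, where `p(t) = ∫₀¹ e^{-4t sin² (π y)} dy` is the return
probability at time `t` of continuous-time simple random walk on `ℤ`.

For `t ≤ 1/4` the chord bound `e^{-s} ≤ 1 - s/2` on `[0, 1]` gives `p(t) ≤ 1 - t ≤ e^{-t}`,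
which contributes at most `1/d`. For `t ≥ 1/4`, Jordan's inequality `|sin (π y)| ≥ 2|y|` on
the period `[-1/2, 1/2]` compares `p(t)` with a Gaussian integral: `p(t) ≤ √(π/16t) ≤ (4t)^{-1/2}`,
which contributes at most `1/(2d - 4)`. Finally `1/d + 1/(2d - 4) ≤ 8/(d + 1)` for `d ≥ 3`.
-/

open Real MeasureTheory Set

lemma exp_neg_le_one_sub_half {s : ℝ} (h0 : 0 ≤ s) (h1 : s ≤ 1) : exp (-s) ≤ 1 - s / 2 := by
  have chord := convexOn_exp.2 (mem_univ (-1)) (mem_univ 0) h0 (sub_nonneg.2 h1)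
    (add_sub_cancel s 1)
  simp only [smul_eq_mul, mul_neg, mul_one, mul_zero, add_zero, exp_zero] at chord
  nlinarith [exp_neg_one_lt_half]

lemma lintegral_exp_neg_mul_Ioi {c : ℝ} (hc : 0 < c) :
    ∫⁻ t in Ioi 0, ENNReal.ofReal (exp (-(t * c))) = ENNReal.ofReal c⁻¹ := by
  have hint : IntegrableOn (fun t => exp (-c * t)) (Ioi 0) :=
    integrableOn_exp_mul_Ioi (neg_lt_zero.2 hc) 0
  simp_rw [show ∀ t, -(t * c) = -c * t from fun t => by ring]
  rw [← ofReal_integral_eq_lintegral_ofReal hint (ae_of_all _ fun _ => (exp_pos _).le),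
    integral_exp_mul_Ioi (neg_lt_zero.2 hc)]
  simp [neg_div]

lemma lintegral_ofReal_inv_le_lintegral_exp {α : Type*} [MeasurableSpace α] {μ : Measure α}
    [SFinite μ] {Q : α → ℝ} (hQ : Measurable Q) (hQ0 : ∀ x, 0 ≤ Q x) :
    ∫⁻ x, ENNReal.ofReal (Q x)⁻¹ ∂μ
      ≤ ∫⁻ t in Ioi 0, ∫⁻ x, ENNReal.ofReal (exp (-(t * Q x))) ∂μ := by
  have laplace : ∀ x, ENNReal.ofReal (Q x)⁻¹
      ≤ ∫⁻ t in Ioi 0, ENNReal.ofReal (exp (-(t * Q x))) := fun x => by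
    rcases (hQ0 x).eq_or_lt with hx | hx
    · simp [← hx] -- `(0 : ℝ)⁻¹ = 0`
    · rw [lintegral_exp_neg_mul_Ioi hx]
  refine (lintegral_mono laplace).trans_eq (lintegral_lintegral_swap ?_)
  exact (ENNReal.measurable_ofReal.comp (measurable_exp.comp
    (measurable_snd.mul (hQ.comp measurable_fst)).neg)).aemeasurable

lemma lintegral_Ioi_inv_mul_rpow {c p : ℝ} (hc : 0 < c) (hp : 1 < p) :
    ∫⁻ t in Ioi c⁻¹, ENNReal.ofReal ((c * t) ^ (-p))
      = ENNReal.ofReal (c * (p - 1))⁻¹ := by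
  have hsplit : ∀ t ∈ Ioi c⁻¹, (c * t) ^ (-p) = c ^ (-p) * t ^ (-p) := fun t ht =>
    mul_rpow hc.le ((inv_pos.2 hc).trans ht).le
  have hp' : -p < -1 := neg_lt_neg hp
  rw [setLIntegral_congr_fun measurableSet_Ioi fun t ht => by rw [hsplit t ht],
    ← ofReal_integral_eq_lintegral_ofReal
      ((integrableOn_Ioi_rpow_of_lt hp' (inv_pos.2 hc)).const_mul _)
      ((ae_restrict_iff' measurableSet_Ioi).2 (ae_of_all _ fun t ht =>
        by have := (inv_pos.2 hc).trans ht; positivity)),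
    integral_const_mul, integral_Ioi_rpow_of_lt hp' (inv_pos.2 hc)]
  congr 1
  have hpow : c ^ (-p) * c ^ (p - 1) = c⁻¹ := by
    rw [← rpow_add hc, show -p + (p - 1) = -1 by ring, rpow_neg_one]
  rw [inv_rpow hc.le, ← rpow_neg hc.le, show -(-p + 1) = p - 1 by ring,
    show c ^ (-p) * (-c ^ (p - 1) / (-p + 1)) = c ^ (-p) * c ^ (p - 1) / (p - 1) by
      rw [show -p + 1 = -(p - 1) by ring, neg_div_neg_eq, mul_div_assoc], hpow, mul_inv,
    div_eq_mul_inv]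

lemma setLIntegral_univ_pi_ofReal_prod {ι E : Type*} [Fintype ι] [MeasurableSpace E]
    {μ : Measure E} [SigmaFinite μ] {s : Set E} {f : E → ℝ} (hf : IntegrableOn f s μ)
    (hf0 : ∀ y, 0 ≤ f y) :
    ∫⁻ x in univ.pi fun _ : ι => s, ENNReal.ofReal (∏ i, f (x i)) ∂(Measure.pi fun _ => μ)
      = ENNReal.ofReal ((∫ y in s, f y ∂μ) ^ Fintype.card ι) := by
  rw [Measure.restrict_pi_pi, ← ofReal_integral_eq_lintegral_ofReal
    (Integrable.fintype_prod (f := fun _ => f) fun _ => hf)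
    (ae_of_all _ fun x => Finset.prod_nonneg fun i _ => hf0 (x i)),
    integral_fintype_prod_eq_pow]

noncomputable def latticeSymbol (y : ℝ) : ℝ := 4 * sin (π * y) ^ 2

lemma two_sub_two_mul_cos_eq_latticeSymbol (y : ℝ) :
    2 - 2 * cos (2 * π * y) = latticeSymbol y := by
  rw [latticeSymbol, sin_sq_eq_half_sub, ← mul_assoc]
  ring

lemma two_mul_sub_two_mul_sum_cos_eq {d : ℕ} (x : Fin d → ℝ) :
    2 * (d : ℝ) - 2 * ∑ i, cos (2 * π * x i) = ∑ i, latticeSymbol (x i) := by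
  simp_rw [← two_sub_two_mul_cos_eq_latticeSymbol, Finset.sum_sub_distrib, ← Finset.mul_sum]
  simp [mul_comm]

lemma latticeSymbol_nonneg (y : ℝ) : 0 ≤ latticeSymbol y := by
  unfold latticeSymbol; positivity

lemma latticeSymbol_le_four (y : ℝ) : latticeSymbol y ≤ 4 := by
  unfold latticeSymbol; nlinarith [sin_sq_le_one (π * y)]

@[fun_prop]
lemma continuous_latticeSymbol : Continuous latticeSymbol := by
  unfold latticeSymbol; fun_prop

lemma periodic_latticeSymbol : Function.Periodic latticeSymbol 1 := by
  intro y
  rw [latticeSymbol, mul_add, mul_one, sin_add_pi, neg_sq, latticeSymbol]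

lemma sixteen_mul_sq_le_latticeSymbol {y : ℝ} (hy : |y| ≤ 1 / 2) :
    16 * y ^ 2 ≤ latticeSymbol y := by
  suffices 2 * |y| ≤ |sin (π * y)| by
    have := sq_le_sq' (by linarith [abs_nonneg y]) this
    rw [mul_pow, sq_abs, sq_abs] at this
    unfold latticeSymbol; linarith
  have jordan := mul_le_sin (x := π * |y|) (by positivity) (by nlinarith [pi_pos])
  rw [← mul_assoc, div_mul_cancel₀ _ pi_ne_zero] at jordan
  rcases abs_cases y with ⟨hy, -⟩ | ⟨hy, -⟩
  · rw [hy] at jordan ⊢; exact jordan.trans (le_abs_self _)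
  · simp only [hy, mul_neg, sin_neg] at jordan ⊢; exact jordan.trans (neg_le_abs _)

lemma integral_latticeSymbol : ∫ y in Icc (0 : ℝ) 1, latticeSymbol y = 2 := by
  simp_rw [integral_Icc_eq_integral_Ioc, ← intervalIntegral.integral_of_le zero_le_one,
    ← two_sub_two_mul_cos_eq_latticeSymbol]
  rw [intervalIntegral.integral_sub (by simp) (by apply Continuous.intervalIntegrable; fun_prop),
    intervalIntegral.integral_const_mul, intervalIntegral.integral_comp_mul_left
      (fun y => cos y) (by positivity : 2 * π ≠ 0)]
  simp

noncomputable def returnProbability (t : ℝ) : ℝ :=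
  ∫ y in Icc (0 : ℝ) 1, exp (-(t * latticeSymbol y))

lemma returnProbability_nonneg (t : ℝ) : 0 ≤ returnProbability t :=
  setIntegral_nonneg measurableSet_Icc fun _ _ => (exp_pos _).le

lemma returnProbability_le_exp_neg {t : ℝ} (h0 : 0 ≤ t) (h1 : t ≤ 4⁻¹) :
    returnProbability t ≤ exp (-t) := by
  have pointwise : ∀ y, exp (-(t * latticeSymbol y)) ≤ 1 - t / 2 * latticeSymbol y := by
    intro y
    have := exp_neg_le_one_sub_half (s := t * latticeSymbol y)
      (mul_nonneg h0 (latticeSymbol_nonneg y))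
      (by nlinarith [latticeSymbol_nonneg y, latticeSymbol_le_four y])
    linarith
  calc returnProbability t ≤ ∫ y in Icc (0 : ℝ) 1, (1 - t / 2 * latticeSymbol y) :=
        setIntegral_mono_on (Continuous.integrableOn_Icc (by fun_prop))
          (Continuous.integrableOn_Icc (by fun_prop)) measurableSet_Icc fun y _ => pointwise y
    _ = 1 - t := by
        rw [integral_sub (Continuous.integrableOn_Icc (by fun_prop))
          (Continuous.integrableOn_Icc (by fun_prop)), integral_const_mul,
          integral_latticeSymbol]
        simp
    _ ≤ exp (-t) := one_sub_le_exp_neg t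

lemma returnProbability_le_sqrt {t : ℝ} (ht : 0 < t) :
    returnProbability t ≤ √(π / (16 * t)) := by
  set f := fun y => exp (-(t * latticeSymbol y))
  have hf : Continuous f := by fun_prop
  have periodic : Function.Periodic f 1 := fun y => by simp only [f, periodic_latticeSymbol y]
  have gaussian_bound :
      ∀ y ∈ Icc (-(1 / 2) : ℝ) (1 / 2), f y ≤ exp (-(16 * t) * y ^ 2) := by
    intro y hy
    have := sixteen_mul_sq_le_latticeSymbol (abs_le.2 hy)
    simp only [f, exp_le_exp]
    nlinarith
  calc returnProbability t = ∫ y in (0 : ℝ)..0 + 1, f y := by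
        rw [returnProbability, integral_Icc_eq_integral_Ioc, zero_add,
          intervalIntegral.integral_of_le zero_le_one]
    _ = ∫ y in (-(1 / 2) : ℝ)..-(1 / 2) + 1, f y := periodic.intervalIntegral_add_eq 0 _
    _ ≤ ∫ y in (-(1 / 2) : ℝ)..-(1 / 2) + 1, exp (-(16 * t) * y ^ 2) := by
        refine intervalIntegral.integral_mono_on (by norm_num) (hf.intervalIntegrable _ _)
          (Continuous.intervalIntegrable (by fun_prop) _ _) fun y hy => gaussian_bound y ?_
        convert hy using 2; norm_num
    _ ≤ ∫ y, exp (-(16 * t) * y ^ 2) := by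
        rw [intervalIntegral.integral_of_le (by norm_num)]
        exact setIntegral_le_integral (integrable_exp_neg_mul_sq (by positivity))
          (ae_of_all _ fun _ => (exp_pos _).le)
    _ = √(π / (16 * t)) := integral_gaussian _

lemma returnProbability_pow_le_rpow {t : ℝ} (ht : 0 < t) (d : ℕ) :
    returnProbability t ^ d ≤ (4 * t) ^ (-(d / 2 : ℝ)) := by
  have hle : returnProbability t ≤ (4 * t) ^ (-(1 / 2 : ℝ)) := by
    rw [rpow_neg (by positivity), ← sqrt_eq_rpow, ← sqrt_inv]
    refine (returnProbability_le_sqrt ht).trans (sqrt_le_sqrt ?_)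
    rw [div_le_iff₀ (by positivity), inv_mul_eq_div, le_div_iff₀ (by positivity)]
    nlinarith [pi_le_four]
  calc returnProbability t ^ d ≤ ((4 * t) ^ (-(1 / 2 : ℝ))) ^ d :=
        pow_le_pow_left₀ (returnProbability_nonneg t) hle d
    _ = (4 * t) ^ (-(d / 2 : ℝ)) := by
        rw [← rpow_natCast, ← rpow_mul (by positivity)]
        ring_nf

lemma lintegral_cube_exp_neg_mul_sum (d : ℕ) (t : ℝ) :
    ∫⁻ x in univ.pi fun _ : Fin d => Icc (0 : ℝ) 1,
        ENNReal.ofReal (exp (-(t * ∑ i, latticeSymbol (x i))))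
      = ENNReal.ofReal (returnProbability t ^ d) := by
  simp_rw [Finset.mul_sum, ← Finset.sum_neg_distrib, exp_sum]
  rw [volume_pi, setLIntegral_univ_pi_ofReal_prod (f := fun y => exp (-(t * latticeSymbol y)))
    (Continuous.integrableOn_Icc (by fun_prop)) fun _ => (exp_pos _).le, Fintype.card_fin]
  rfl

lemma lintegral_Ioc_returnProbability_pow_le {d : ℕ} (hd : 0 < d) :
    ∫⁻ t in Ioc 0 4⁻¹, ENNReal.ofReal (returnProbability t ^ d)
      ≤ ENNReal.ofReal (d : ℝ)⁻¹ :=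
  calc ∫⁻ t in Ioc 0 4⁻¹, ENNReal.ofReal (returnProbability t ^ d)
      ≤ ∫⁻ t in Ioc 0 4⁻¹, ENNReal.ofReal (exp (-(t * d))) := by
        refine setLIntegral_mono (by fun_prop) fun t ht => ENNReal.ofReal_le_ofReal ?_
        rw [show -(t * d) = d * -t by ring, exp_nat_mul]
        exact pow_le_pow_left₀ (returnProbability_nonneg t)
          (returnProbability_le_exp_neg ht.1.le ht.2) d
    _ ≤ ∫⁻ t in Ioi 0, ENNReal.ofReal (exp (-(t * d))) :=
        lintegral_mono_set Ioc_subset_Ioi_self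
    _ = ENNReal.ofReal (d : ℝ)⁻¹ := lintegral_exp_neg_mul_Ioi (by positivity)

lemma lintegral_Ioi_returnProbability_pow_le {d : ℕ} (hd : 2 < d) :
    ∫⁻ t in Ioi 4⁻¹, ENNReal.ofReal (returnProbability t ^ d)
      ≤ ENNReal.ofReal (2 * (d : ℝ) - 4)⁻¹ :=
  calc ∫⁻ t in Ioi 4⁻¹, ENNReal.ofReal (returnProbability t ^ d)
      ≤ ∫⁻ t in Ioi 4⁻¹, ENNReal.ofReal ((4 * t) ^ (-(d / 2 : ℝ))) :=
        setLIntegral_mono (by fun_prop) fun t ht => ENNReal.ofReal_le_ofReal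
          (returnProbability_pow_le_rpow ((inv_pos.2 four_pos).trans ht) d)
    _ = ENNReal.ofReal (2 * (d : ℝ) - 4)⁻¹ := by
        rw [show 2 * (d : ℝ) - 4 = 4 * (d / 2 - 1) by ring]
        refine lintegral_Ioi_inv_mul_rpow four_pos ?_
        rw [lt_div_iff₀ two_pos]
        exact_mod_cast hd

lemma lintegral_cube_inv_sum_latticeSymbol_le {d : ℕ} (hd : 2 < d) :
    ∫⁻ x in univ.pi fun _ : Fin d => Icc (0 : ℝ) 1,
        ENNReal.ofReal (∑ i, latticeSymbol (x i))⁻¹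
      ≤ ENNReal.ofReal ((d : ℝ)⁻¹ + (2 * (d : ℝ) - 4)⁻¹) :=
  calc _ ≤ ∫⁻ t in Ioi 0, ∫⁻ x in univ.pi fun _ : Fin d => Icc (0 : ℝ) 1,
          ENNReal.ofReal (exp (-(t * ∑ i, latticeSymbol (x i)))) :=
        lintegral_ofReal_inv_le_lintegral_exp (by fun_prop)
          fun x => Finset.sum_nonneg fun i _ => latticeSymbol_nonneg (x i)
    _ = ∫⁻ t in Ioi 0, ENNReal.ofReal (returnProbability t ^ d) := by
        simp_rw [lintegral_cube_exp_neg_mul_sum]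
    _ = (∫⁻ t in Ioc 0 4⁻¹, ENNReal.ofReal (returnProbability t ^ d))
          + ∫⁻ t in Ioi 4⁻¹, ENNReal.ofReal (returnProbability t ^ d) := by
        rw [← Ioc_union_Ioi_eq_Ioi (by norm_num : (0 : ℝ) ≤ 4⁻¹),
          lintegral_union measurableSet_Ioi Ioc_disjoint_Ioi_same]
    _ ≤ ENNReal.ofReal (d : ℝ)⁻¹ + ENNReal.ofReal (2 * (d : ℝ) - 4)⁻¹ :=
        add_le_add (lintegral_Ioc_returnProbability_pow_le (by omega))
          (lintegral_Ioi_returnProbability_pow_le hd)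
    _ = ENNReal.ofReal ((d : ℝ)⁻¹ + (2 * (d : ℝ) - 4)⁻¹) := by
        have : (2 : ℝ) < d := by exact_mod_cast hd
        rw [ENNReal.ofReal_add (by positivity) (inv_nonneg.2 (by linarith))]

theorem hydro_upper_bound' (d : ℕ) (hd : 3 ≤ d) :
    (∫ x in (Set.univ.pi fun _ : Fin d => Set.Icc (0 : ℝ) 1),
        (2 * d - 2 * ∑ i, Real.cos (2 * π * x i))⁻¹) ≤ 8 / (d + 1) := by
  have hd' : (3 : ℝ) ≤ d := by exact_mod_cast hd
  simp_rw [two_mul_sub_two_mul_sum_cos_eq]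
  rw [integral_eq_lintegral_of_nonneg_ae (ae_of_all _ fun x => inv_nonneg.2 <|
    Finset.sum_nonneg fun i _ => latticeSymbol_nonneg (x i))
    (Measurable.inv (by fun_prop)).aestronglyMeasurable]
  refine ENNReal.toReal_le_of_le_ofReal (by positivity)
    ((lintegral_cube_inv_sum_latticeSymbol_le (by omega)).trans (ENNReal.ofReal_le_ofReal ?_))
  rw [inv_add_inv (by positivity) (by linarith),
    div_le_div_iff₀ (by nlinarith) (by positivity)]
  nlinarith
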